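/- Let I = (a,b) ⊂ ℝ, E a Banach space, α : I → E continuous with right derivative ∂_s⁺α(s) = 0 for all s ∈ I, and suppose α(t) = 0 for some t ∈ I. Then α ≡ 0 on [t, b). -/

import Mathlib

open Filter Topology Set

theorem hasDerivWithinAt_Ici_iff_tendsto_slope_zero_right {F : Type*} [NormedAddCommGroup F]
    [NormedSpace ℝ F] {f : ℝ → F} {f' : F} {x : ℝ} :
    HasDerivWithinAt f f' (Ici x) x ↔
      Tendsto (fun t ↦ t⁻¹ • (f (x + t) - f x)) (𝓝[>] 0) (𝓝 f') := by
  have hmap : 𝓝[>] x = map (x + ·) (𝓝[>] 0) := by simp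
  rw [← hasDerivWithinAt_Ioi_iff_Ici, hasDerivWithinAt_iff_tendsto_slope' self_notMem_Ioi, hmap,
    tendsto_map'_iff]
  simp [Function.comp_def, slope_def_module]

theorem vanishing_right_derivative_implies_zero
    {E : Type*} [NormedAddCommGroup E] [NormedSpace ℝ E]
    (a b : ℝ) (α : ℝ → E) (hα : ContinuousOn α (Set.Ioo a b))
    (hd : ∀ s ∈ Set.Ioo a b, Tendsto (fun σ : ℝ => σ⁻¹ • (α (s + σ) - α s))
        (𝓝[>] (0:ℝ)) (𝓝 (0:E)))
    (t : ℝ) (ht : t ∈ Set.Ioo a b) (hαt : α t = 0) :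
    ∀ s ∈ Set.Ico t b, α s = 0 := by
  intro s hs
  have hsub : Icc t s ⊆ Ioo a b := Icc_subset_Ioo ht.1 hs.2
  have hderiv : ∀ x ∈ Ico t s, HasDerivWithinAt α 0 (Ici x) x := fun x hx ↦
    hasDerivWithinAt_Ici_iff_tendsto_slope_zero_right.2 (hd x (hsub (Ico_subset_Icc_self hx)))
  rw [constant_of_has_deriv_right_zero (hα.mono hsub) hderiv s (right_mem_Icc.2 hs.1), hαt]
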